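/- Let D be the doubling D ⊕ Da inside a composition algebra as above, where D is commutative. Then for all x ∈ Da and u, v ∈ D one has u(vx) = (uv)x and (xu)v = x(uv); i.e., Da is a D-bimodule. Conversely, if these associativity relations hold for all such elements, D is commutative. -/

import Mathlib

open QuadraticMap

/-- A composition algebra structure on `V` over `F`: a (not necessarily associative)
unital bilinear multiplication together with a multiplicative quadratic form whose
polar bilinear form is nondegenerate. -/
structure CompAlg (F : Type*) [Field F] (V : Type*) [AddCommGroup V] [Module F V] where
  Q : QuadraticForm F V
  mul : V → V → V
  one : V
  mul_add_left : ∀ x y z : V, mul (x + y) z = mul x z + mul y z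
  mul_add_right : ∀ x y z : V, mul x (y + z) = mul x y + mul x z
  mul_smul_left : ∀ (a : F) (x y : V), mul (a • x) y = a • mul x y
  mul_smul_right : ∀ (a : F) (x y : V), mul x (a • y) = a • mul x y
  one_mul : ∀ x : V, mul one x = x
  mul_one : ∀ x : V, mul x one = x
  norm_mul : ∀ x y : V, Q (mul x y) = Q x * Q y
  nondeg : ∀ x : V, (∀ y : V, polar (⇑Q) y x = 0) → x = 0

namespace CompAlg

variable {F : Type*} [Field F] {V : Type*} [AddCommGroup V] [Module F V]

/-- The associated bilinear form `f(x,y) = Q(x+y) - Q(x) - Q(y)`. -/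
def f (A : CompAlg F V) (x y : V) : F := A.Q (x + y) - A.Q x - A.Q y

/-- Conjugation `x̄ = f(x,1)·1 - x`. -/
def conj (A : CompAlg F V) (x : V) : V := A.f x A.one • A.one - x

end CompAlg

/-! Linearizing `Q(xy) = Q(x)Q(y)` gives `x̄(zy) + z̄(xy) = f(x,z) y` and its mirror image.
For `a ⊥ D` and `u ∈ D` these become `u(ay) = a(ūy)` and `(ya)u = (yū)a`, so `u(va) = (vu)a`. Since
`(ya)ā = Q(a) y`, right multiplication by `a` is injective, and `u(va) = (uv)a` forces `uv = vu`.

Conversely, if `D` is commutative, the product of two pure (trace-zero) elements is self-conjugate,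
hence a scalar, and `p̄(pq) = Q(p) q` becomes `f(p,q) p = 2 Q(p) q`. Nondegeneracy of `f` on `D`
makes nonzero pure elements anisotropic, so the pure elements of `D` lie on a line and `D` is
associative. Both bimodule relations then reduce to associativity and commutativity of `D`. -/

namespace CompAlg

variable {F : Type*} [Field F] {V : Type*} [AddCommGroup V] [Module F V] (A : CompAlg F V)

lemma f_comm (x y : V) : A.f x y = A.f y x := polar_comm _ x y

lemma f_add_left (x y z : V) : A.f (x + y) z = A.f x z + A.f y z := A.Q.polar_add_left x y z

lemma f_add_right (x y z : V) : A.f x (y + z) = A.f x y + A.f x z := A.Q.polar_add_right x y z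

lemma f_sub_left (x y z : V) : A.f (x - y) z = A.f x z - A.f y z := A.Q.polar_sub_left x y z

lemma f_sub_right (x y z : V) : A.f x (y - z) = A.f x y - A.f x z := A.Q.polar_sub_right x y z

lemma f_neg_right (x y : V) : A.f x (-y) = -A.f x y := A.Q.polar_neg_right x y

lemma f_smul_left (c : F) (x y : V) : A.f (c • x) y = c * A.f x y := A.Q.polar_smul_left c x y

lemma f_smul_right (c : F) (x y : V) : A.f x (c • y) = c * A.f x y := A.Q.polar_smul_right c x y

lemma f_self (x : V) : A.f x x = 2 * A.Q x := by
  rw [f, ← two_smul F x, QuadraticMap.map_smul, smul_eq_mul]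
  ring

protected lemma neg_mul (x y : V) : A.mul (-x) y = -A.mul x y := by
  rw [← neg_one_smul F x, A.mul_smul_left, neg_one_smul]

protected lemma mul_neg (x y : V) : A.mul x (-y) = -A.mul x y := by
  rw [← neg_one_smul F y, A.mul_smul_right, neg_one_smul]

protected lemma sub_mul (x y z : V) : A.mul (x - y) z = A.mul x z - A.mul y z := by
  rw [sub_eq_add_neg, A.mul_add_left, A.neg_mul, sub_eq_add_neg]

protected lemma mul_sub (x y z : V) : A.mul x (y - z) = A.mul x y - A.mul x z := by
  rw [sub_eq_add_neg, A.mul_add_right, A.mul_neg, sub_eq_add_neg]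

lemma f_mul_mul_left (x y w : V) : A.f (A.mul x y) (A.mul x w) = A.Q x * A.f y w := by
  have h := A.norm_mul x (y + w)
  rw [A.mul_add_right] at h
  simp only [f]
  rw [h, A.norm_mul, A.norm_mul]
  ring

lemma f_mul_mul_right (x y w : V) : A.f (A.mul y x) (A.mul w x) = A.Q x * A.f y w := by
  have h := A.norm_mul (y + w) x
  rw [A.mul_add_left] at h
  simp only [f]
  rw [h, A.norm_mul, A.norm_mul]
  ring

/-- The composition law `Q(xy) = Q(x)Q(y)` linearized in both arguments. -/
lemma f_mul_mul_add_f_mul_mul (x y z w : V) :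
    A.f (A.mul x y) (A.mul z w) + A.f (A.mul z y) (A.mul x w) = A.f x z * A.f y w := by
  have h := A.f_mul_mul_left (x + z) y w
  rw [A.mul_add_left, A.mul_add_left, A.f_add_left, A.f_add_right, A.f_add_right,
    A.f_mul_mul_left, A.f_mul_mul_left] at h
  have hQ : A.Q (x + z) = A.Q x + A.Q z + A.f x z := by
    simp only [f]; ring
  rw [hQ] at h
  linear_combination h

lemma f_conj_right (x y : V) : A.f x (A.conj y) = A.f y A.one * A.f x A.one - A.f x y := by
  rw [conj, A.f_sub_right, A.f_smul_right]

lemma f_mul_left_adjoint (x y z : V) : A.f (A.mul x y) z = A.f y (A.mul (A.conj x) z) := by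
  have h := A.f_mul_mul_add_f_mul_mul x y A.one z
  rw [A.one_mul, A.one_mul] at h
  rw [conj, A.sub_mul, A.mul_smul_left, A.one_mul, A.f_sub_right, A.f_smul_right]
  linear_combination h

lemma f_mul_right_adjoint (x y z : V) : A.f (A.mul x y) z = A.f x (A.mul z (A.conj y)) := by
  have h := A.f_mul_mul_add_f_mul_mul x y z A.one
  rw [A.mul_one, A.mul_one] at h
  rw [conj, A.mul_sub, A.mul_smul_right, A.mul_one, A.f_sub_right, A.f_smul_right]
  linear_combination h - A.f_comm (A.mul z y) x

/-- `f x y = f (1x) (1y) = Q(1) f x y`, so if `Q 1 ≠ 1` the polar form vanishes. -/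
lemma Q_one_of_Q_ne_zero {w : V} (hw : A.Q w ≠ 0) : A.Q A.one = 1 := by
  by_contra h
  have hf : ∀ x y : V, A.f x y = 0 := by
    intro x y
    have h1 := A.f_mul_mul_left A.one x y
    rw [A.one_mul, A.one_mul] at h1
    have h2 : (1 - A.Q A.one) * A.f x y = 0 := by linear_combination h1
    exact (mul_eq_zero.mp h2).resolve_left (sub_ne_zero.mpr (Ne.symm h))
  exact hw (by rw [A.nondeg w (fun y => hf y w), QuadraticMap.map_zero])

lemma conj_conj (hQ : A.Q A.one = 1) (x : V) : A.conj (A.conj x) = x := by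
  rw [conj, conj, A.f_sub_left, A.f_smul_left, A.f_self, hQ]
  rw [show A.f x A.one * (2 * 1) - A.f x A.one = A.f x A.one by ring]
  abel

lemma conj_eq_neg {x : V} (hx : A.f x A.one = 0) : A.conj x = -x := by
  rw [conj, hx, zero_smul, zero_sub]

lemma conj_mul (x y : V) : A.conj (A.mul x y) = A.mul (A.conj y) (A.conj x) := by
  rw [← sub_eq_zero]
  refine A.nondeg _ fun w => ?_
  change A.f w _ = 0
  have h1 : A.f (A.mul x y) A.one = A.f x A.one * A.f y A.one - A.f y x := by
    rw [A.f_mul_left_adjoint, A.mul_one, A.f_conj_right]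
  have h2 : A.f (A.mul y w) A.one = A.f y A.one * A.f w A.one - A.f w y := by
    rw [A.f_mul_left_adjoint, A.mul_one, A.f_conj_right]
  have h3 : A.f (A.mul x w) y = A.f x A.one * A.f w y - A.f w (A.mul x y) := by
    rw [A.f_mul_left_adjoint, conj, A.sub_mul, A.mul_smul_left, A.one_mul, A.f_sub_right,
      A.f_smul_right]
  have h4 := A.f_mul_mul_add_f_mul_mul y w x A.one
  rw [A.mul_one, A.mul_one] at h4
  rw [A.f_sub_right, A.f_conj_right, ← A.f_mul_left_adjoint, A.f_conj_right, h1, h2]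
  linear_combination h4 - h3

lemma conj_mul_mul_self (x y : V) : A.mul (A.conj x) (A.mul x y) = A.Q x • y := by
  rw [← sub_eq_zero]
  refine A.nondeg _ fun w => ?_
  change A.f w _ = 0
  rw [A.f_sub_right, A.f_smul_right, ← A.f_mul_left_adjoint x w, A.f_mul_mul_left, sub_self]

lemma mul_mul_conj_self (x y : V) :
    A.mul (A.mul y x) (A.conj x) = A.Q x • y := by
  rw [← sub_eq_zero]
  refine A.nondeg _ fun w => ?_
  change A.f w _ = 0
  rw [A.f_sub_right, A.f_smul_right, ← A.f_mul_right_adjoint w x, A.f_mul_mul_right, sub_self]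

lemma conj_mul_mul_add_conj_mul_mul (x z y : V) :
    A.mul (A.conj x) (A.mul z y) + A.mul (A.conj z) (A.mul x y) = A.f x z • y := by
  rw [← sub_eq_zero]
  refine A.nondeg _ fun w => ?_
  change A.f w _ = 0
  rw [A.f_sub_right, A.f_add_right, A.f_smul_right, ← A.f_mul_left_adjoint x w,
    ← A.f_mul_left_adjoint z w]
  linear_combination A.f_mul_mul_add_f_mul_mul x w z y

lemma mul_mul_conj_add_mul_mul_conj (x z y : V) :
    A.mul (A.mul y z) (A.conj x) + A.mul (A.mul y x) (A.conj z) = A.f x z • y := by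
  rw [← sub_eq_zero]
  refine A.nondeg _ fun w => ?_
  change A.f w _ = 0
  rw [A.f_sub_right, A.f_add_right, A.f_smul_right, ← A.f_mul_right_adjoint w x,
    ← A.f_mul_right_adjoint w z, A.f_comm (A.mul w x), A.f_comm x z, A.f_comm w y]
  linear_combination A.f_mul_mul_add_f_mul_mul y z w x

lemma mul_left_injective_of_Q_ne_zero {a : V} (ha : A.Q a ≠ 0) :
    Function.Injective (fun y => A.mul y a) := fun y y' h => by
  have hy := A.mul_mul_conj_self a y
  rw [show A.mul y a = A.mul y' a from h, A.mul_mul_conj_self] at hy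
  exact smul_right_injective V ha hy.symm

lemma f_orthogonal_conj {a u : V} (ha1 : A.f a A.one = 0) (hau : A.f a u = 0) :
    A.f (A.conj u) a = 0 := by
  rw [A.f_comm, A.f_conj_right, ha1, hau, mul_zero, sub_zero]

lemma mul_mul_of_orthogonal_left (hQ : A.Q A.one = 1) {a u : V} (ha1 : A.f a A.one = 0)
    (hau : A.f a u = 0) (y : V) : A.mul u (A.mul a y) = A.mul a (A.mul (A.conj u) y) := by
  have h := A.conj_mul_mul_add_conj_mul_mul (A.conj u) a y
  rwa [A.conj_conj hQ, A.conj_eq_neg ha1, A.f_orthogonal_conj ha1 hau, zero_smul, A.neg_mul,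
    add_neg_eq_zero] at h

lemma mul_mul_of_orthogonal_right (hQ : A.Q A.one = 1) {a u : V} (ha1 : A.f a A.one = 0)
    (hau : A.f a u = 0) (y : V) : A.mul (A.mul y a) u = A.mul (A.mul y (A.conj u)) a := by
  have h := A.mul_mul_conj_add_mul_mul_conj (A.conj u) a y
  rwa [A.conj_conj hQ, A.conj_eq_neg ha1, A.f_orthogonal_conj ha1 hau, zero_smul, A.mul_neg,
    add_neg_eq_zero] at h

lemma conj_mem {D : Submodule F V} (hD1 : A.one ∈ D) {u : V} (hu : u ∈ D) : A.conj u ∈ D :=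
  D.sub_mem (D.smul_mem _ hD1) hu

lemma mul_mul_orthogonal (hQ : A.Q A.one = 1) {D : Submodule F V} (hD1 : A.one ∈ D)
    (hDmul : ∀ x ∈ D, ∀ y ∈ D, A.mul x y ∈ D) {a : V} (ha : ∀ x ∈ D, A.f a x = 0)
    {u v : V} (hu : u ∈ D) (hv : v ∈ D) : A.mul u (A.mul v a) = A.mul (A.mul v u) a := by
  have hwa : ∀ w ∈ D, A.mul w a = A.mul a (A.conj w) := fun w hw => by
    simpa only [A.mul_one] using A.mul_mul_of_orthogonal_left hQ (ha _ hD1) (ha w hw) A.one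
  rw [hwa v hv, A.mul_mul_of_orthogonal_left hQ (ha _ hD1) (ha u hu), ← A.conj_mul,
    ← hwa _ (hDmul v hv u hu)]

def purePart (x : V) : V := x - (A.f x A.one / 2) • A.one

lemma f_purePart_one (h2 : (2 : F) ≠ 0) (hQ : A.Q A.one = 1) (x : V) :
    A.f (A.purePart x) A.one = 0 := by
  rw [purePart, A.f_sub_left, A.f_smul_left, A.f_self, hQ]
  field_simp
  ring

lemma smul_one_add_purePart (x : V) : (A.f x A.one / 2) • A.one + A.purePart x = x :=
  add_sub_cancel _ _

lemma purePart_mem {D : Submodule F V} (hD1 : A.one ∈ D) {x : V} (hx : x ∈ D) :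
    A.purePart x ∈ D :=
  D.sub_mem hx (D.smul_mem _ hD1)

/-- `conj (pq) = q̄ p̄ = qp = pq`, and a self-conjugate element is a scalar. -/
lemma mul_eq_smul_one_of_pure (h2 : (2 : F) ≠ 0) {p q : V} (hp : A.f p A.one = 0)
    (hq : A.f q A.one = 0) (hpq : A.mul p q = A.mul q p) :
    A.mul p q = (-A.f p q / 2) • A.one := by
  have hconj : A.conj (A.mul p q) = A.mul p q := by
    rw [A.conj_mul, A.conj_eq_neg hp, A.conj_eq_neg hq, A.neg_mul, A.mul_neg, neg_neg, hpq]
  have htr : A.f (A.mul p q) A.one = -A.f p q := by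
    rw [A.f_mul_left_adjoint, A.mul_one, A.conj_eq_neg hp, A.f_neg_right, A.f_comm]
  have htwice : (-A.f p q) • A.one = (2 : F) • A.mul p q := by
    rw [two_smul]
    rw [conj, htr] at hconj
    exact sub_eq_iff_eq_add.mp hconj
  rw [div_eq_inv_mul, mul_smul, htwice, smul_smul, inv_mul_cancel₀ h2, one_smul]

lemma half_f_smul_eq_Q_smul (h2 : (2 : F) ≠ 0) {p q : V} (hp : A.f p A.one = 0)
    (hq : A.f q A.one = 0) (hpq : A.mul p q = A.mul q p) :
    (A.f p q / 2) • p = A.Q p • q := by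
  have h := A.conj_mul_mul_self p q
  rwa [A.conj_eq_neg hp, A.neg_mul, A.mul_eq_smul_one_of_pure h2 hp hq hpq, A.mul_smul_right,
    A.mul_one, ← neg_smul, neg_div, neg_neg] at h

section Commutative

variable {D : Submodule F V}

lemma eq_zero_of_pure_of_Q_eq_zero (h2 : (2 : F) ≠ 0) (hQ : A.Q A.one = 1) (hD1 : A.one ∈ D)
    (hDnd : ∀ x ∈ D, (∀ y ∈ D, A.f y x = 0) → x = 0)
    (hc : ∀ u ∈ D, ∀ v ∈ D, A.mul u v = A.mul v u) {q : V} (hq : q ∈ D)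
    (hq1 : A.f q A.one = 0) (hQq : A.Q q = 0) : q = 0 := by
  by_contra hq0
  refine hq0 (hDnd q hq fun y hy => ?_)
  have h := A.half_f_smul_eq_Q_smul h2 hq1 (A.f_purePart_one h2 hQ y)
    (hc q hq _ (A.purePart_mem hD1 hy))
  rw [hQq, zero_smul, smul_eq_zero, div_eq_zero_iff] at h
  have hqy : A.f q (A.purePart y) = 0 := by tauto
  rw [← A.smul_one_add_purePart y, A.f_add_left, A.f_smul_left, A.f_comm A.one, hq1, mul_zero,
    zero_add, A.f_comm, hqy]

/-- The pure elements of `D` span a space of dimension at most one. -/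
lemma f_smul_eq_f_smul_of_pure (h2 : (2 : F) ≠ 0) (hQ : A.Q A.one = 1) (hD1 : A.one ∈ D)
    (hDnd : ∀ x ∈ D, (∀ y ∈ D, A.f y x = 0) → x = 0)
    (hc : ∀ u ∈ D, ∀ v ∈ D, A.mul u v = A.mul v u) {p q r : V} (hp : p ∈ D) (hq : q ∈ D)
    (hr : r ∈ D) (hp1 : A.f p A.one = 0) (hq1 : A.f q A.one = 0) (hr1 : A.f r A.one = 0) :
    A.f p q • r = A.f q r • p := by
  by_cases hQq : A.Q q = 0
  · rw [A.eq_zero_of_pure_of_Q_eq_zero h2 hQ hD1 hDnd hc hq hq1 hQq]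
    simp [f]
  have hqr := A.half_f_smul_eq_Q_smul h2 hq1 hr1 (hc q hq r hr)
  have hqp := A.half_f_smul_eq_Q_smul h2 hq1 hp1 (hc q hq p hp)
  refine smul_right_injective V hQq ?_
  calc A.Q q • A.f p q • r = A.f p q • (A.f q r / 2) • q := by rw [smul_comm, hqr]
    _ = A.f q r • (A.f q p / 2) • q := by
      rw [smul_smul, smul_smul, A.f_comm q p]
      ring_nf
    _ = A.Q q • A.f q r • p := by rw [hqp, smul_comm]

lemma mul_assoc_of_pure (h2 : (2 : F) ≠ 0) (hQ : A.Q A.one = 1) (hD1 : A.one ∈ D)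
    (hDnd : ∀ x ∈ D, (∀ y ∈ D, A.f y x = 0) → x = 0)
    (hc : ∀ u ∈ D, ∀ v ∈ D, A.mul u v = A.mul v u) {p q r : V} (hp : p ∈ D) (hq : q ∈ D)
    (hr : r ∈ D) (hp1 : A.f p A.one = 0) (hq1 : A.f q A.one = 0) (hr1 : A.f r A.one = 0) :
    A.mul (A.mul p q) r = A.mul p (A.mul q r) := by
  rw [A.mul_eq_smul_one_of_pure h2 hp1 hq1 (hc p hp q hq),
    A.mul_eq_smul_one_of_pure h2 hq1 hr1 (hc q hq r hr), A.mul_smul_left, A.one_mul,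
    A.mul_smul_right, A.mul_one, div_eq_inv_mul, div_eq_inv_mul, mul_smul, mul_smul, neg_smul,
    neg_smul, A.f_smul_eq_f_smul_of_pure h2 hQ hD1 hDnd hc hp hq hr hp1 hq1 hr1]

lemma mul_assoc_of_comm (h2 : (2 : F) ≠ 0) (hQ : A.Q A.one = 1) (hD1 : A.one ∈ D)
    (hDnd : ∀ x ∈ D, (∀ y ∈ D, A.f y x = 0) → x = 0)
    (hc : ∀ u ∈ D, ∀ v ∈ D, A.mul u v = A.mul v u) {x y z : V} (hx : x ∈ D) (hy : y ∈ D)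
    (hz : z ∈ D) : A.mul (A.mul x y) z = A.mul x (A.mul y z) := by
  rw [← A.smul_one_add_purePart x, ← A.smul_one_add_purePart y, ← A.smul_one_add_purePart z]
  simp only [A.mul_add_left, A.mul_add_right, A.mul_smul_left, A.mul_smul_right, A.one_mul,
    A.mul_one]
  rw [A.mul_assoc_of_pure h2 hQ hD1 hDnd hc (A.purePart_mem hD1 hx) (A.purePart_mem hD1 hy)
    (A.purePart_mem hD1 hz) (A.f_purePart_one h2 hQ x) (A.f_purePart_one h2 hQ y)
    (A.f_purePart_one h2 hQ z)]

end Commutative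

end CompAlg

theorem stmt3_general {F : Type*} [Field F] {V : Type*} [AddCommGroup V] [Module F V]
    (A : CompAlg F V) (h2 : (2 : F) ≠ 0)
    (D : Submodule F V) (hD1 : A.one ∈ D)
    (hDmul : ∀ x ∈ D, ∀ y ∈ D, A.mul x y ∈ D)
    (hDnd : ∀ x ∈ D, (∀ y ∈ D, A.f y x = 0) → x = 0)
    (a : V) (ha : ∀ x ∈ D, A.f a x = 0) (hQa : A.Q a ≠ 0) :
    (∀ u ∈ D, ∀ v ∈ D, ∀ y ∈ D,
        A.mul u (A.mul v (A.mul y a)) = A.mul (A.mul u v) (A.mul y a) ∧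
        A.mul (A.mul (A.mul y a) u) v = A.mul (A.mul y a) (A.mul u v))
      ↔ (∀ u ∈ D, ∀ v ∈ D, A.mul u v = A.mul v u) := by
  have hQ := A.Q_one_of_Q_ne_zero hQa
  have hL : ∀ u ∈ D, ∀ v ∈ D, A.mul u (A.mul v a) = A.mul (A.mul v u) a :=
    fun u hu v hv => A.mul_mul_orthogonal hQ hD1 hDmul ha hu hv
  have hR : ∀ u ∈ D, ∀ y : V, A.mul (A.mul y a) u = A.mul (A.mul y (A.conj u)) a :=
    fun u hu => A.mul_mul_of_orthogonal_right hQ (ha _ hD1) (ha u hu)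
  constructor
  · intro hbimod u hu v hv
    have h := (hbimod u hu v hv A.one hD1).1
    rw [A.one_mul, hL u hu v hv] at h
    exact (A.mul_left_injective_of_Q_ne_zero hQa h).symm
  · intro hc u hu v hv y hy
    have hu' := A.conj_mem hD1 hu
    have hv' := A.conj_mem hD1 hv
    constructor
    · rw [hL v hv y hy, hL u hu _ (hDmul y hy v hv), hL _ (hDmul u hu v hv) y hy,
        A.mul_assoc_of_comm h2 hQ hD1 hDnd hc hy hv hu, hc v hv u hu]
    · rw [hR u hu, hR v hv, hR _ (hDmul u hu v hv), A.conj_mul,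
        A.mul_assoc_of_comm h2 hQ hD1 hDnd hc hy hu' hv', hc _ hu' _ hv']

/-- in the doubling `D ⊕ Da`, the elements of `Da` satisfy the bimodule
associativity relations `u(vx) = (uv)x` and `(xu)v = x(uv)` (for `u, v ∈ D`, `x ∈ Da`)
if and only if `D` is commutative. -/
theorem stmt3 {F : Type*} [Field F] {V : Type*} [AddCommGroup V] [Module F V]
    (A : CompAlg F V) (h2 : (2 : F) ≠ 0)
    (D : Submodule F V) (hD1 : A.one ∈ D)
    (hDmul : ∀ x ∈ D, ∀ y ∈ D, A.mul x y ∈ D)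
    (hDnd : ∀ x ∈ D, (∀ y ∈ D, A.f y x = 0) → x = 0)
    (hDfin : FiniteDimensional F D)
    (hDproper : D ≠ ⊤)
    (a : V) (ha : ∀ x ∈ D, A.f a x = 0) (hQa : A.Q a ≠ 0) :
    (∀ u ∈ D, ∀ v ∈ D, ∀ y ∈ D,
        A.mul u (A.mul v (A.mul y a)) = A.mul (A.mul u v) (A.mul y a) ∧
        A.mul (A.mul (A.mul y a) u) v = A.mul (A.mul y a) (A.mul u v))
      ↔ (∀ u ∈ D, ∀ v ∈ D, A.mul u v = A.mul v u) :=
  stmt3_general A h2 D hD1 hDmul hDnd a ha hQa
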